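/- arXiv:0907.2849 — 2 statements merged into one kernel-verified Lean document; each statement's English description precedes it below -/
import Mathlib

section
/- For any element s of the set of simple generators S of a Coxeter group W, left multiplication by s gives an isomorphism of posets from {w ∈ W : w ≱ s} (with the right weak order) to {w ∈ W : w ≥ s} (with the right weak order). -/
/-!
`s ≤ w` in the weak order exactly when `s` is a left descent of `w`, and left multiplication by
`s` toggles that property. On elements without the descent it raises every length by one while
leaving `u⁻¹ v` unchanged, so the defining length identity of `u ≤ v` is preserved and reflected.
-/

/-- The right weak order: `u ≤ w` iff `ℓ(u) + ℓ(u⁻¹w) = ℓ(w)`. -/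
def WeakLE {B W : Type*} [Group W] {M : CoxeterMatrix B} (cs : CoxeterSystem M W)
    (u w : W) : Prop :=
  cs.length u + cs.length (u⁻¹ * w) = cs.length w

namespace CoxeterSystem

variable {B W : Type*} [Group W] {M : CoxeterMatrix B} (cs : CoxeterSystem M W)

theorem weakLE_simple_iff_isLeftDescent {w : W} {i : B} :
    WeakLE cs (cs.simple i) w ↔ cs.IsLeftDescent w i := by
  rw [WeakLE, inv_simple, length_simple, isLeftDescent_iff, add_comm]

theorem weakLE_mul_left_iff {g u v : W} (k : ℕ) (hu : cs.length (g * u) = cs.length u + k)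
    (hv : cs.length (g * v) = cs.length v + k) :
    WeakLE cs (g * u) (g * v) ↔ WeakLE cs u v := by
  rw [WeakLE, WeakLE, mul_inv_rev, mul_assoc, inv_mul_cancel_left, hu, hv]
  omega

end CoxeterSystem

/-- Left multiplication by a simple generator `s` is an isomorphism of posets from
`{w : w ≱ s}` to `{w : w ≥ s}` in the right weak order: it maps the first set into the
second, its inverse (itself) maps the second into the first, and it preserves and
reflects the weak order. -/
theorem simple_mul_weak_order_iso {B W : Type*} [Group W] {M : CoxeterMatrix B}
    (cs : CoxeterSystem M W) (i : B) :
    (∀ w : W, ¬ WeakLE cs (cs.simple i) w → WeakLE cs (cs.simple i) (cs.simple i * w)) ∧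
    (∀ w : W, WeakLE cs (cs.simple i) w → ¬ WeakLE cs (cs.simple i) (cs.simple i * w)) ∧
    (∀ u v : W, ¬ WeakLE cs (cs.simple i) u → ¬ WeakLE cs (cs.simple i) v →
      (WeakLE cs u v ↔ WeakLE cs (cs.simple i * u) (cs.simple i * v))) := by
  simp only [cs.weakLE_simple_iff_isLeftDescent]
  refine ⟨fun w hw => ?_, fun w hw => cs.isLeftDescent_iff_not_isLeftDescent_mul.mp hw,
    fun u v hu hv => ?_⟩
  · rwa [cs.isLeftDescent_iff_not_isLeftDescent_mul, cs.simple_mul_simple_cancel_left]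
  · exact (cs.weakLE_mul_left_iff 1 (cs.not_isLeftDescent_iff.mp hu)
      (cs.not_isLeftDescent_iff.mp hv)).symm
end

section
/- Let A be a symmetric or crystallographic generalized Cartan matrix, let J be an Ω-acyclic subset of S with linear extension (s_1, ..., s_k) of Ω|_J, and set t = s_1 s_2 ⋯ s_k ⋯ s_2 s_1. If r ∈ J satisfies r ≤ s_k in the order Ω|_J, then the coefficient of α_r in the expansion of β_t in simple roots is at least 1. -/
/-!
Write `x = β_{(s₂,…,s_k)}`, so that `β_{(s₁,…,s_k)} = s₁(x)`, and induct on the word. The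
coefficients of `x` are nonnegative and vanish off the word, in particular at `s₁`. Since `s₁` is
minimal for `Ω|_J`, a path from `s_k` down to `r ≠ s₁` avoids `s₁`, and `s₁` leaves the
coefficient of `α_r` unchanged. For `r = s₁` the path continues through some `c → s₁`, and the
new coefficient is `-∑ A_{s₁ s'} x_{s'} ≥ -A_{s₁ c} x_c ≥ x_c ≥ 1`: all summands are `≤ 0`, and
`A_{s₁ c} ≤ -1` because `A` is symmetric with `A_{s₁ c} A_{c s₁} ≥ 1` or integral.
-/

variable {B : Type*}

/-- The reflection `s` acting on `V = B → ℝ`: `s(x) = x - (∑ s' A_{s s'} x_{s'}) α_s`. -/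
noncomputable def sigmaRefl [Fintype B] [DecidableEq B] (A : B → B → ℝ) (s : B)
    (x : B → ℝ) : B → ℝ :=
  x - (∑ s', A s s' * x s') • (Pi.single s 1 : B → ℝ)

/-- For a list `(s₁, …, s_k)`, the positive root `β_t` of `t = s₁⋯s_k⋯s₁`, namely
`s₁ s₂ ⋯ s_{k-1} (α_{s_k})`. -/
noncomputable def betaWord [Fintype B] [DecidableEq B] (A : B → B → ℝ) :
    List B → (B → ℝ)
  | [] => 0
  | [s] => (Pi.single s 1 : B → ℝ)
  | s :: rest => sigmaRefl A s (betaWord A rest)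

section

variable [Fintype B] [DecidableEq B] {A : B → B → ℝ}

lemma sigmaRefl_apply_of_ne (s : B) (x : B → ℝ) {r : B} (h : r ≠ s) :
    sigmaRefl A s x r = x r := by
  simp [sigmaRefl, h]

lemma sigmaRefl_apply_self (s : B) (x : B → ℝ) :
    sigmaRefl A s x s = x s - ∑ s', A s s' * x s' := by
  simp [sigmaRefl]

lemma neg_mul_le_sigmaRefl_apply_self (hoff : ∀ r s, r ≠ s → A r s ≤ 0) {s : B} {x : B → ℝ}
    (hx : 0 ≤ x) (hxs : x s = 0) (m : B) : -(A s m * x m) ≤ sigmaRefl A s x s := by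
  have hterm : ∀ s', A s s' * x s' ≤ 0 := by
    intro s'
    rcases eq_or_ne s' s with rfl | h
    · simp [hxs]
    · exact mul_nonpos_of_nonpos_of_nonneg (hoff s s' h.symm) (hx s')
  have hsingle := Finset.single_le_sum (f := fun i => -(A s i * x i))
    (fun i _ => neg_nonneg.mpr (hterm i)) (Finset.mem_univ m)
  rw [Finset.sum_neg_distrib] at hsingle
  rw [sigmaRefl_apply_self, hxs]
  linarith

lemma sigmaRefl_nonneg (hoff : ∀ r s, r ≠ s → A r s ≤ 0) {s : B} {x : B → ℝ}
    (hx : 0 ≤ x) (hxs : x s = 0) : 0 ≤ sigmaRefl A s x := by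
  intro r
  rcases eq_or_ne r s with rfl | h
  · simpa [hxs] using neg_mul_le_sigmaRefl_apply_self hoff hx hxs r
  · simpa [sigmaRefl_apply_of_ne s x h] using hx r

lemma betaWord_cons (s : B) {l : List B} (hl : l ≠ []) :
    betaWord A (s :: l) = sigmaRefl A s (betaWord A l) := by
  cases l with
  | nil => exact absurd rfl hl
  | cons _ _ => rfl

lemma betaWord_apply_of_not_mem {r : B} : ∀ {l : List B}, r ∉ l → betaWord A l r = 0
  | [], _ => rfl
  | [s], h => by simp_all [betaWord]
  | s :: a :: t, h => by
    rw [List.mem_cons, not_or] at h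
    rw [betaWord_cons s (List.cons_ne_nil a t), sigmaRefl_apply_of_ne s _ h.1]
    exact betaWord_apply_of_not_mem h.2

lemma betaWord_nonneg (hoff : ∀ r s, r ≠ s → A r s ≤ 0) : ∀ {l : List B}, l.Nodup →
    0 ≤ betaWord A l
  | [], _ => le_rfl
  | [s], _ => by simp [betaWord]
  | s :: a :: t, h => by
    rw [List.nodup_cons] at h
    rw [betaWord_cons s (List.cons_ne_nil a t)]
    exact sigmaRefl_nonneg hoff (betaWord_nonneg hoff h.2) (betaWord_apply_of_not_mem h.1)

end

lemma le_neg_one_of_ne_zero {A : B → B → ℝ} (hoff : ∀ r s, r ≠ s → A r s ≤ 0)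
    (hprod : ∀ r s, r ≠ s → A r s ≠ 0 → 1 ≤ A r s * A s r)
    (hsymcrys : (∀ r s, A r s = A s r) ∨ (∀ r s, ∃ n : ℤ, A r s = (n : ℝ)))
    {r s : B} (hrs : r ≠ s) (h : A r s ≠ 0) : A r s ≤ -1 := by
  have hle := hoff r s hrs
  rcases hsymcrys with hsym | hcrys
  · nlinarith [hprod r s hrs h, hsym s r]
  · obtain ⟨n, hn⟩ := hcrys r s
    rw [hn] at hle h ⊢
    have : n < 0 := lt_of_le_of_ne (by exact_mod_cast hle) (by exact_mod_cast h)
    exact_mod_cast Int.le_sub_one_of_lt this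

/-- The reflexive transitive closure of `Below Ω l` is the order `Ω|_l`. -/
def Below (Ω : B → B → Prop) (l : List B) (x y : B) : Prop := x ∈ l ∧ y ∈ l ∧ Ω y x

lemma mem_of_reflTransGen_below {Ω : B → B → Prop} {l : List B} {x y : B} :
    Relation.ReflTransGen (Below Ω l) x y → y ∈ l → x ∈ l
  | .refl, hy => hy
  | .tail _ h, _ => mem_of_reflTransGen_below ‹_› h.1

/-- The minimal element `s` of `s :: l` can only occur as the lower end of a path. -/
lemma reflTransGen_below_of_cons {Ω : B → B → Prop} {s x y : B} {l : List B}
    (hmin : ∀ z ∈ s :: l, ¬ Ω s z) (h : Relation.ReflTransGen (Below Ω (s :: l)) x y)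
    (hx : x ≠ s) : Relation.ReflTransGen (Below Ω l) x y := by
  induction h using Relation.ReflTransGen.head_induction_on with
  | refl => exact .refl
  | @head a c hac _ ih =>
    obtain ⟨ha, hc, hΩ⟩ := hac
    have hcs : c ≠ s := by rintro rfl; exact hmin _ ha hΩ
    exact .head ⟨(List.mem_cons.mp ha).resolve_left hx, (List.mem_cons.mp hc).resolve_left hcs,
      hΩ⟩ (ih hcs)

lemma reflTransGen_below_of_isChain {Ω : B → B → Prop} {l p : List B} {r y : B} (hp : p ≠ [])
    (hchain : p.IsChain (fun a b => Ω b a)) (hhead : p.head? = some r)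
    (hlast : p.getLast? = some y) (hsub : ∀ x ∈ p, x ∈ l) :
    Relation.ReflTransGen (Below Ω l) r y := by
  rw [List.head?_eq_some_head hp, Option.some_inj] at hhead
  rw [List.getLast?_eq_some_getLast hp, Option.some_inj] at hlast
  subst hhead hlast
  exact List.relationReflTransGen_of_exists_isChain p
    (hchain.imp_of_mem_imp fun a b ha hb hab => ⟨hsub a ha, hsub b hb, hab⟩) hp

theorem one_le_betaWord [Fintype B] [DecidableEq B] {A : B → B → ℝ} {Ω : B → B → Prop}
    (hoff : ∀ r s, r ≠ s → A r s ≤ 0) (harrow : ∀ r s, Ω s r → A r s ≤ -1)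
    (hirrefl : ∀ r, ¬ Ω r r) :
    ∀ (l : List B) (hne : l ≠ []), l.Nodup → l.Pairwise (fun a b => ¬ Ω a b) →
      ∀ r, Relation.ReflTransGen (Below Ω l) r (l.getLast hne) → 1 ≤ betaWord A l r
  | [], hne, _, _, _, _ => absurd rfl hne
  | [s], _, _, _, r, h => by
    obtain rfl : r = s := List.mem_singleton.mp (mem_of_reflTransGen_below h (List.getLast_mem _))
    simp [betaWord]
  | s :: a :: t, _, hnodup, hpair, r, h => by
    set l := a :: t
    have hl : l ≠ [] := List.cons_ne_nil a t
    rw [List.getLast_cons hl] at h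
    rw [List.nodup_cons] at hnodup
    rw [List.pairwise_cons] at hpair
    have hmin : ∀ z ∈ s :: l, ¬ Ω s z := by
      rintro z hz
      rcases List.mem_cons.mp hz with rfl | hz
      exacts [hirrefl z, hpair.1 z hz]
    have ih := one_le_betaWord hoff harrow hirrefl l hl hnodup.2 hpair.2
    rw [betaWord_cons s hl]
    rcases eq_or_ne r s with rfl | hrs
    · obtain hlast | ⟨c, ⟨-, -, hΩ⟩, hc⟩ := h.cases_head
      · exact absurd (hlast ▸ List.getLast_mem hl) hnodup.1
      have hcr : c ≠ r := by rintro rfl; exact hirrefl c hΩ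
      have h1 := ih c (reflTransGen_below_of_cons hmin hc hcr)
      have hle := neg_mul_le_sigmaRefl_apply_self hoff (betaWord_nonneg hoff hnodup.2)
        (betaWord_apply_of_not_mem hnodup.1) c
      nlinarith [harrow r c hΩ]
    · rw [sigmaRefl_apply_of_ne s _ hrs]
      exact ih r (reflTransGen_below_of_cons hmin h hrs)

theorem one_le_coeff_of_le_general [Fintype B] [DecidableEq B]
    (A : B → B → ℝ) (Ω : B → B → Prop)
    (hoff : ∀ r s, r ≠ s → A r s ≤ 0)
    (hprod : ∀ r s, r ≠ s → A r s ≠ 0 → 1 ≤ A r s * A s r)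
    (hsymcrys : (∀ r s, A r s = A s r) ∨ (∀ r s, ∃ n : ℤ, A r s = (n : ℝ)))
    (hirrefl : ∀ r, ¬ Ω r r)
    (hedge : ∀ r s, r ≠ s → (A r s ≠ 0 ↔ (Ω r s ∨ Ω s r)))
    (l : List B) (hne : l ≠ []) (hnodup : l.Nodup)
    (hlin : ∀ i j : Fin l.length, i < j → ¬ Ω (l.get i) (l.get j))
    (r : B)
    (hle : ∃ p : List B, p ≠ [] ∧ p.Chain' (fun a b => Ω b a) ∧
      p.head? = some r ∧ p.getLast? = some (l.getLast hne) ∧ ∀ x ∈ p, x ∈ l) :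
    1 ≤ betaWord A l r := by
  have harrow : ∀ r s, Ω s r → A r s ≤ -1 := fun r s hΩ =>
    have hrs : r ≠ s := by rintro rfl; exact hirrefl r hΩ
    le_neg_one_of_ne_zero hoff hprod hsymcrys hrs ((hedge r s hrs).mpr (Or.inr hΩ))
  obtain ⟨p, hp, hchain, hhead, hlast, hsub⟩ := hle
  exact one_le_betaWord hoff harrow hirrefl l hne hnodup (List.pairwise_iff_get.mpr hlin) r
    (reflTransGen_below_of_isChain hp hchain hhead hlast hsub)

/-- If `A` is symmetric or crystallographic, `(s₁, …, s_k)` is a linear extension of an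
Ω-acyclic set `J`, `t = s₁⋯s_k⋯s₁`, and `r ≤_J s_k` (i.e. there is a directed path
`r ← ⋯ ← s_k` within `J`, possibly trivial), then the coefficient of `α_r` in `β_t`
is at least `1`. -/
theorem one_le_coeff_of_le [Fintype B] [DecidableEq B]
    (A : B → B → ℝ) (Ω : B → B → Prop)
    (hdiag : ∀ s, A s s = 2)
    (hoff : ∀ r s, r ≠ s → A r s ≤ 0)
    (hzero : ∀ r s, A r s = 0 ↔ A s r = 0)
    (hprod : ∀ r s, r ≠ s → A r s ≠ 0 → 1 ≤ A r s * A s r)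
    (hsymcrys : (∀ r s, A r s = A s r) ∨ (∀ r s, ∃ n : ℤ, A r s = (n : ℝ)))
    (hirrefl : ∀ r, ¬ Ω r r)
    (hasym : ∀ r s, ¬ (Ω r s ∧ Ω s r))
    (hedge : ∀ r s, r ≠ s → (A r s ≠ 0 ↔ (Ω r s ∨ Ω s r)))
    (l : List B) (hne : l ≠ []) (hnodup : l.Nodup)
    (hlin : ∀ i j : Fin l.length, i < j → ¬ Ω (l.get i) (l.get j))
    (r : B) (hr : r ∈ l)
    (hle : ∃ p : List B, p ≠ [] ∧ p.Chain' (fun a b => Ω b a) ∧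
      p.head? = some r ∧ p.getLast? = some (l.getLast hne) ∧ ∀ x ∈ p, x ∈ l) :
    1 ≤ betaWord A l r :=
  one_le_coeff_of_le_general A Ω hoff hprod hsymcrys hirrefl hedge l hne hnodup hlin r hle
end
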